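/- arXiv:math/0007109 — 8 statements merged into one kernel-verified Lean document; each statement's English description precedes it below -/
import Mathlib

section
/- Let α be a partial action of a topological group G on a topological space X. Then the relation ∼ on G × X defined by (r,x) ∼ (s,y) iff x ∈ X_{r⁻¹s} and α_{s⁻¹r}(x) = y is an equivalence relation. -/
/-- A partial action of a topological group `G` on a topological space `X`:
a family `dom t` of open subsets of `X` together with maps `act t` restricting to
homeomorphisms `dom t⁻¹ → dom t`, such that the domain of the global map is open,
the map `(t, x) ↦ act t x` is continuous there, `dom 1 = X`, `act 1 = id`, and
`act (s * t)` extends `act s ∘ act t`. -/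
structure TopPartialAction (G : Type*) (X : Type*) [Group G] [TopologicalSpace G]
    [IsTopologicalGroup G] [TopologicalSpace X] where
  dom : G → Set X
  act : G → X → X
  isOpen_dom : ∀ t, IsOpen (dom t)
  bijOn : ∀ t, Set.BijOn (act t) (dom t⁻¹) (dom t)
  isOpen_graph : IsOpen {p : G × X | p.2 ∈ dom p.1⁻¹}
  continuousOn : ContinuousOn (fun p : G × X => act p.1 p.2) {p : G × X | p.2 ∈ dom p.1⁻¹}
  dom_one : dom 1 = Set.univ
  act_one : ∀ x, act 1 x = x
  act_comp : ∀ s t x, x ∈ dom t⁻¹ → act t x ∈ dom s⁻¹ →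
    x ∈ dom (s * t)⁻¹ ∧ act (s * t) x = act s (act t x)

/-- The relation `(r, x) ∼ (s, y) ↔ x ∈ X_{r⁻¹ s} ∧ α_{s⁻¹ r}(x) = y` on `G × X`. -/
def TopPartialAction.rel {G X : Type*} [Group G] [TopologicalSpace G] [IsTopologicalGroup G]
    [TopologicalSpace X] (α : TopPartialAction G X) (p q : G × X) : Prop :=
  p.2 ∈ α.dom (p.1⁻¹ * q.1) ∧ α.act (q.1⁻¹ * p.1) p.2 = q.2

namespace TopPartialAction

variable {G X : Type*} [Group G] [TopologicalSpace G] [IsTopologicalGroup G]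
  [TopologicalSpace X] (α : TopPartialAction G X)

theorem act_mem_dom {t : G} {x : X} (hx : x ∈ α.dom t⁻¹) : α.act t x ∈ α.dom t :=
  (α.bijOn t).mapsTo hx

theorem act_inv_act {t : G} {x : X} (hx : x ∈ α.dom t⁻¹) : α.act t⁻¹ (α.act t x) = x := by
  have h := (α.act_comp t⁻¹ t x hx (by simpa using α.act_mem_dom hx)).2
  rwa [inv_mul_cancel, α.act_one, eq_comm] at h

theorem rel_mk_iff {r s : G} {x y : X} :
    α.rel (r, x) (s, y) ↔ x ∈ α.dom (s⁻¹ * r)⁻¹ ∧ α.act (s⁻¹ * r) x = y := by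
  rw [mul_inv_rev, inv_inv]
  rfl

theorem rel_refl (p : G × X) : α.rel p p :=
  ⟨by simp [α.dom_one], by simpa using α.act_one p.2⟩

theorem rel_symm : ∀ {p q : G × X}, α.rel p q → α.rel q p := by
  rintro ⟨r, x⟩ ⟨s, y⟩ h
  obtain ⟨hx, rfl⟩ := α.rel_mk_iff.1 h
  refine α.rel_mk_iff.2 ⟨?_, ?_⟩
  · simpa using α.act_mem_dom hx
  · simpa using α.act_inv_act hx

theorem rel_trans : ∀ {p q r : G × X}, α.rel p q → α.rel q r → α.rel p r := by
  rintro ⟨r, x⟩ ⟨s, y⟩ ⟨t, z⟩ hxy hyz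
  obtain ⟨hx, rfl⟩ := α.rel_mk_iff.1 hxy
  obtain ⟨hy, rfl⟩ := α.rel_mk_iff.1 hyz
  have h := α.act_comp _ _ _ hx hy
  rw [mul_assoc, mul_inv_cancel_left] at h
  exact α.rel_mk_iff.2 h

end TopPartialAction

/-- The relation `∼` associated with a partial action is an equivalence relation. -/
theorem TopPartialAction.rel_equivalence {G X : Type*} [Group G] [TopologicalSpace G]
    [IsTopologicalGroup G] [TopologicalSpace X] (α : TopPartialAction G X) :
    Equivalence α.rel :=
  ⟨α.rel_refl, α.rel_symm, α.rel_trans⟩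
end

section
/- Let α be a partial action of a topological group G on a topological space X, let X̃ = (G × X)/∼ with quotient map q, induced continuous action α̃ given by α̃_s(q(t,x)) = q(st,x), and ι : X → X̃, ι(x) = q(e,x). Then (ι, α̃) has the following universal property: for every continuous action δ of G on a topological space Z and every continuous map ψ : X → Z such that ψ(α_t(x)) = δ_t(ψ(x)) for all t ∈ G and x ∈ X_{t⁻¹}, there exists a unique continuous map ψ̃ : X̃ → Z satisfying ψ̃ ∘ ι = ψ and ψ̃(α̃_t(y)) = δ_t(ψ̃(y)) for all t ∈ G, y ∈ X̃; moreover ψ̃(q(t,x)) = δ_t(ψ(x)) for all t ∈ G, x ∈ X. -/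
namespace TopPartialAction

variable {G X Z : Type*} [Group G] [TopologicalSpace G] [IsTopologicalGroup G]
  [TopologicalSpace X] (α : TopPartialAction G X)

theorem rel.map_eq {δ : G → Z → Z} (hδm : ∀ s t z, δ s (δ t z) = δ (s * t) z)
    {ψ : X → Z} (hψe : ∀ t x, x ∈ α.dom t⁻¹ → ψ (α.act t x) = δ t (ψ x))
    {r s : G} {x y : X} (h : α.rel (r, x) (s, y)) : δ r (ψ x) = δ s (ψ y) := by
  obtain ⟨hdom, hact⟩ := h
  have hx : x ∈ α.dom (s⁻¹ * r)⁻¹ := by rwa [mul_inv_rev, inv_inv]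
  calc δ r (ψ x) = δ s (δ (s⁻¹ * r) (ψ x)) := by rw [hδm, mul_inv_cancel_left]
    _ = δ s (ψ y) := by rw [← hψe _ _ hx, hact]

def envelopingLift {δ : G → Z → Z} (hδm : ∀ s t z, δ s (δ t z) = δ (s * t) z)
    {ψ : X → Z} (hψe : ∀ t x, x ∈ α.dom t⁻¹ → ψ (α.act t x) = δ t (ψ x)) :
    Quot α.rel → Z :=
  Quot.lift (fun p : G × X => δ p.1 (ψ p.2)) fun ⟨_, _⟩ ⟨_, _⟩ => rel.map_eq α hδm hψe

section envelopingLift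

variable {α} {δ : G → Z → Z} (hδm : ∀ s t z, δ s (δ t z) = δ (s * t) z)
  {ψ : X → Z} (hψe : ∀ t x, x ∈ α.dom t⁻¹ → ψ (α.act t x) = δ t (ψ x))

@[simp]
theorem envelopingLift_mk (t : G) (x : X) :
    envelopingLift α hδm hψe (Quot.mk α.rel (t, x)) = δ t (ψ x) :=
  rfl

theorem envelopingLift_mk_one (hδ1 : ∀ z, δ 1 z = z) (x : X) :
    envelopingLift α hδm hψe (Quot.mk α.rel (1, x)) = ψ x :=
  hδ1 _

theorem continuous_envelopingLift [TopologicalSpace Z]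
    (hδc : Continuous fun p : G × Z => δ p.1 p.2) (hψ : Continuous ψ) :
    Continuous (envelopingLift α hδm hψe) :=
  continuous_quot_lift _ (hδc.comp (continuous_fst.prodMk (hψ.comp continuous_snd)))

theorem envelopingLift_map {β : G → Quot α.rel → Quot α.rel}
    (hβ : ∀ s t x, β s (Quot.mk α.rel (t, x)) = Quot.mk α.rel (s * t, x))
    (t : G) (y : Quot α.rel) :
    envelopingLift α hδm hψe (β t y) = δ t (envelopingLift α hδm hψe y) := by
  induction y using Quot.ind with
  | mk p => rw [hβ, envelopingLift_mk, envelopingLift_mk, hδm]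

end envelopingLift

theorem mk_eq_map_mk_one {β : G → Quot α.rel → Quot α.rel}
    (hβ : ∀ s t x, β s (Quot.mk α.rel (t, x)) = Quot.mk α.rel (s * t, x)) (t : G) (x : X) :
    Quot.mk α.rel (t, x) = β t (Quot.mk α.rel (1, x)) := by
  rw [hβ, mul_one]

theorem eq_of_map_eq_of_mk_one_eq {β : G → Quot α.rel → Quot α.rel}
    (hβ : ∀ s t x, β s (Quot.mk α.rel (t, x)) = Quot.mk α.rel (s * t, x))
    {δ : G → Z → Z} {Ψ₁ Ψ₂ : Quot α.rel → Z}
    (h₁ : ∀ t y, Ψ₁ (β t y) = δ t (Ψ₁ y)) (h₂ : ∀ t y, Ψ₂ (β t y) = δ t (Ψ₂ y))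
    (hone : ∀ x, Ψ₁ (Quot.mk α.rel (1, x)) = Ψ₂ (Quot.mk α.rel (1, x))) : Ψ₁ = Ψ₂ := by
  funext y
  induction y using Quot.ind with
  | mk p => rw [mk_eq_map_mk_one α hβ, h₁, h₂, hone]

end TopPartialAction

/-- Universal property of the enveloping action: given a continuous global action `δ`
of `G` on `Z` and a continuous map `ψ : X → Z` satisfying `ψ (α_t x) = δ_t (ψ x)` for
`x ∈ X_{t⁻¹}`, there exists a unique continuous `Ψ : X̃ → Z` with `Ψ ∘ ι = ψ` which is
`G`-equivariant; moreover `Ψ (q (t, x)) = δ_t (ψ x)`. -/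
theorem TopPartialAction.universal_property {G X Z : Type*} [Group G] [TopologicalSpace G]
    [IsTopologicalGroup G] [TopologicalSpace X] [TopologicalSpace Z]
    (α : TopPartialAction G X)
    (β : G → Quot α.rel → Quot α.rel)
    (hβ : ∀ s t x, β s (Quot.mk α.rel (t, x)) = Quot.mk α.rel (s * t, x))
    (δ : G → Z → Z)
    (hδc : Continuous fun p : G × Z => δ p.1 p.2)
    (hδ1 : ∀ z, δ 1 z = z)
    (hδm : ∀ s t z, δ s (δ t z) = δ (s * t) z)
    (ψ : X → Z) (hψ : Continuous ψ)
    (hψe : ∀ t x, x ∈ α.dom t⁻¹ → ψ (α.act t x) = δ t (ψ x)) :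
    ∃ Ψ : Quot α.rel → Z,
      (Continuous Ψ ∧ (∀ x, Ψ (Quot.mk α.rel (1, x)) = ψ x) ∧
        (∀ t y, Ψ (β t y) = δ t (Ψ y)) ∧
        (∀ t x, Ψ (Quot.mk α.rel (t, x)) = δ t (ψ x))) ∧
      ∀ Ψ' : Quot α.rel → Z, Continuous Ψ' → (∀ x, Ψ' (Quot.mk α.rel (1, x)) = ψ x) →
        (∀ t y, Ψ' (β t y) = δ t (Ψ' y)) → Ψ' = Ψ := by
  have extends_ψ := envelopingLift_mk_one hδm hψe hδ1
  have equivariant := envelopingLift_map hδm hψe hβ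
  refine ⟨envelopingLift α hδm hψe,
    ⟨continuous_envelopingLift hδm hψe hδc hψ, extends_ψ, equivariant, envelopingLift_mk hδm hψe⟩,
    fun Ψ' _ hΨ'_one hΨ'_map => ?_⟩
  exact eq_of_map_eq_of_mk_one_eq α hβ hΨ'_map equivariant fun x => by rw [hΨ'_one, extends_ψ]
end

section
/- Let α be a partial action of a topological group G on a compact topological space X. Then there exists an open subgroup H of G such that X_{t⁻¹} = X for every t ∈ H (so that α restricted to H is a global action of H on X). In particular, if G is connected, then X_t = X for every t ∈ G, i.e. α is a global action. -/
/-!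
The set of `t` with `X_{t⁻¹} = X` is open: its complement is the projection to `G` of the
closed complement of the open set `Γ_α ⊆ G × X`, and the projection along a compact factor is
a closed map. Axiom (iii) makes the elements `t` with `X_{t⁻¹} = X_t = X` a subgroup, which is
then open; an open subgroup is closed, hence everything when `G` is connected.
-/

namespace TopPartialAction

variable {G X : Type*} [Group G] [TopologicalSpace G] [IsTopologicalGroup G]
    [TopologicalSpace X] (α : TopPartialAction G X)

lemma dom_mul_inv_eq_univ {s t : G} (hs : α.dom s⁻¹ = Set.univ)
    (ht : α.dom t⁻¹ = Set.univ) : α.dom (s * t)⁻¹ = Set.univ :=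
  Set.eq_univ_of_forall fun x =>
    (α.act_comp s t x (ht ▸ Set.mem_univ x) (hs ▸ Set.mem_univ _)).1

def globalSubgroup : Subgroup G where
  carrier := {t | α.dom t⁻¹ = Set.univ ∧ α.dom t = Set.univ}
  one_mem' := by simp only [Set.mem_ofPred_eq, inv_one, α.dom_one, and_self]
  inv_mem' := by
    rintro t ⟨ht_inv, ht⟩
    exact ⟨by rwa [inv_inv], ht_inv⟩
  mul_mem' := by
    rintro s t ⟨hs_inv, hs⟩ ⟨ht_inv, ht⟩
    refine ⟨α.dom_mul_inv_eq_univ hs_inv ht_inv, ?_⟩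
    rw [← inv_inv (s * t), mul_inv_rev]
    exact α.dom_mul_inv_eq_univ (by rwa [inv_inv]) (by rwa [inv_inv])

lemma isOpen_setOf_dom_inv_eq_univ [CompactSpace X] :
    IsOpen {t : G | α.dom t⁻¹ = Set.univ} := by
  convert (isClosedMap_fst_of_compactSpace _ α.isOpen_graph.isClosed_compl).isOpen_compl
    using 1
  ext t
  simp [Set.eq_univ_iff_forall]

lemma isOpen_globalSubgroup [CompactSpace X] : IsOpen (α.globalSubgroup : Set G) := by
  have h := α.isOpen_setOf_dom_inv_eq_univ
  have h' : IsOpen {t : G | α.dom t = Set.univ} := by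
    simpa only [Set.preimage_ofPred_eq, inv_inv] using h.preimage continuous_inv
  exact h.inter h'

lemma globalSubgroup_eq_top [CompactSpace X] [ConnectedSpace G] : α.globalSubgroup = ⊤ :=
  SetLike.coe_injective <| IsClopen.eq_univ
    ⟨α.globalSubgroup.isClosed_of_isOpen α.isOpen_globalSubgroup, α.isOpen_globalSubgroup⟩
    ⟨1, α.globalSubgroup.one_mem⟩

end TopPartialAction

/-- For a partial action of a topological group `G` on a compact space `X`, there is an
open subgroup `H ≤ G` on which the partial action is global (`X_{t⁻¹} = X` for `t ∈ H`);
in particular, if `G` is connected, the partial action is a global action. -/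
theorem TopPartialAction.global_on_open_subgroup {G X : Type*} [Group G] [TopologicalSpace G]
    [IsTopologicalGroup G] [TopologicalSpace X] [CompactSpace X] (α : TopPartialAction G X) :
    (∃ H : Subgroup G, IsOpen (H : Set G) ∧ ∀ t ∈ H, α.dom t⁻¹ = Set.univ) ∧
    (ConnectedSpace G → ∀ t : G, α.dom t = Set.univ) := by
  refine ⟨⟨α.globalSubgroup, α.isOpen_globalSubgroup, fun t ht => ht.1⟩, fun _ t => ?_⟩
  have ht : t ∈ α.globalSubgroup := α.globalSubgroup_eq_top ▸ Subgroup.mem_top t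
  exact ht.2
end

section
/- Let A be a C*-algebra and {J_λ}_{λ∈Λ} a family of closed two-sided ideals of A. Define N : A → ℝ by N(a) = sup { ‖a·x‖ : λ ∈ Λ, x ∈ J_λ, ‖x‖ ≤ 1 } (with N(a) = 0 if the set is empty). Then N is a C*-seminorm on A bounded by the norm: for all a, b ∈ A and scalars c, one has N(a) ≤ ‖a‖, N(a + b) ≤ N(a) + N(b), N(c·a) = |c|·N(a), N(a·b) ≤ N(a)·N(b), N(a*) = N(a), and N(a*·a) = N(a)². -/
/-!
Everything is formal once one knows `‖a x‖ ≤ N(a) ‖x‖` for `x ∈ J_λ`, which needs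
`x / ‖x‖ ∈ J_λ`. The `J_λ` are only assumed to be closed and to absorb multiplication, but a
closed right ideal of a C*-algebra is automatically a subspace: `c • x` is the limit of
`x * (c • u)` along an approximate unit `u`. Submultiplicativity then follows since `b x ∈ J_λ`,
and the two star identities from the C*-identity in the form `‖a x‖² ≤ ‖a⋆ a x‖` for `‖x‖ ≤ 1`.
-/

variable {A : Type*} [NonUnitalNormedRing A] [StarRing A] [CStarRing A]
  [NormedSpace ℂ A] [IsScalarTower ℂ A A] [SMulCommClass ℂ A A]
  [StarModule ℂ A] [CompleteSpace A]

/-- The seminorm `N(a) = sup { ‖a·x‖ : λ ∈ Λ, x ∈ J_λ, ‖x‖ ≤ 1 }` associated with a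
family of ideals `J_λ` of a C*-algebra `A` (equal to `0` if the set is empty, since
`sSup ∅ = 0` in `ℝ`). -/
noncomputable def idealSeminorm {Λ : Type*} (J : Λ → Set A) (a : A) : ℝ :=
  sSup {r : ℝ | ∃ l x, x ∈ J l ∧ ‖x‖ ≤ 1 ∧ r = ‖a * x‖}

open Filter Topology

theorem Filter.IsApproximateUnit.smul_mem_of_isClosed {α R : Type*} [TopologicalSpace α]
    [Mul α] [SMul R α] [ContinuousConstSMul R α] [SMulCommClass R α α] {l : Filter α}
    (hl : l.IsApproximateUnit) {J : Set α} (hJ : IsClosed J)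
    (hmul : ∀ a, ∀ x ∈ J, x * a ∈ J) {x : α} (hx : x ∈ J) (c : R) : c • x ∈ J := by
  have := hl.neBot
  have hlim : Tendsto (fun u ↦ x * c • u) l (𝓝 (c • x)) := by
    simpa only [mul_smul_comm] using (hl.tendsto_mul_left x).const_smul c
  exact hJ.mem_of_tendsto hlim (.of_forall fun u ↦ hmul _ x hx)

theorem smul_mem_of_isClosed_of_mul_mem {J : Set A} (hJ : IsClosed J)
    (hmul : ∀ a, ∀ x ∈ J, x * a ∈ J) {x : A} (hx : x ∈ J) (c : ℂ) : c • x ∈ J := by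
  let _ : NonUnitalCStarAlgebra A := { ‹NonUnitalNormedRing A›, ‹StarRing A›, ‹CStarRing A›,
    ‹NormedSpace ℂ A›, ‹IsScalarTower ℂ A A›, ‹SMulCommClass ℂ A A›, ‹StarModule ℂ A›,
    ‹CompleteSpace A› with }
  -- the approximate unit is stated for C*-algebras carrying a star order; the spectral one will do
  let _ := CStarAlgebra.spectralOrder A
  have := CStarAlgebra.spectralOrderedRing A
  exact (CStarAlgebra.increasingApproximateUnit A).toIsApproximateUnit.smul_mem_of_isClosed
    hJ hmul hx c

theorem sq_norm_mul_le_norm_star_mul_self_mul {E : Type*} [NonUnitalNormedRing E] [StarRing E]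
    [CStarRing E] (a : E) {x : E} (hx : ‖x‖ ≤ 1) : ‖a * x‖ ^ 2 ≤ ‖star a * a * x‖ :=
  calc ‖a * x‖ ^ 2 = ‖star x * (star a * a * x)‖ := by
        rw [sq, ← CStarRing.norm_star_mul_self, star_mul, mul_assoc, mul_assoc]
    _ ≤ ‖star x‖ * ‖star a * a * x‖ := norm_mul_le _ _
    _ ≤ ‖star a * a * x‖ := by
        rw [norm_star]; exact mul_le_of_le_one_left (norm_nonneg _) hx

theorem norm_mul_le_norm_of_norm_le_one {E : Type*} [NonUnitalSeminormedRing E] (a : E) {x : E}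
    (hx : ‖x‖ ≤ 1) : ‖a * x‖ ≤ ‖a‖ :=
  (norm_mul_le a x).trans (mul_le_of_le_one_right (norm_nonneg a) hx)

section NormedRing

variable {E : Type*} [NonUnitalNormedRing E] {Λ : Type*} (J : Λ → Set E)

theorem idealSeminorm_nonneg (a : E) : 0 ≤ idealSeminorm J a :=
  Real.sSup_nonneg <| by rintro _ ⟨l, x, -, -, rfl⟩; exact norm_nonneg _

theorem idealSeminorm_le {a : E} {r : ℝ} (hr : 0 ≤ r)
    (h : ∀ l, ∀ x ∈ J l, ‖x‖ ≤ 1 → ‖a * x‖ ≤ r) : idealSeminorm J a ≤ r :=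
  Real.sSup_le (by rintro _ ⟨l, x, hx, hx1, rfl⟩; exact h l x hx hx1) hr

theorem idealSeminorm_le_norm (a : E) : idealSeminorm J a ≤ ‖a‖ :=
  idealSeminorm_le J (norm_nonneg a) fun _ _ _ ↦ norm_mul_le_norm_of_norm_le_one a

theorem norm_mul_le_idealSeminorm (a : E) {l : Λ} {x : E} (hx : x ∈ J l) (hx1 : ‖x‖ ≤ 1) :
    ‖a * x‖ ≤ idealSeminorm J a :=
  le_csSup ⟨‖a‖, by rintro _ ⟨l, x, -, hx1, rfl⟩; exact norm_mul_le_norm_of_norm_le_one a hx1⟩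
    ⟨l, x, hx, hx1, rfl⟩

theorem idealSeminorm_add_le (a b : E) :
    idealSeminorm J (a + b) ≤ idealSeminorm J a + idealSeminorm J b :=
  idealSeminorm_le J (add_nonneg (idealSeminorm_nonneg J a) (idealSeminorm_nonneg J b))
    fun _ x hx hx1 ↦ calc
      ‖(a + b) * x‖ ≤ ‖a * x‖ + ‖b * x‖ := by rw [add_mul]; exact norm_add_le _ _
      _ ≤ _ := add_le_add (norm_mul_le_idealSeminorm J a hx hx1)
        (norm_mul_le_idealSeminorm J b hx hx1)

end NormedRing

section NormedAlgebra

variable {𝕜 E : Type*} [RCLike 𝕜] [NonUnitalNormedRing E] [NormedSpace 𝕜 E]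
  {Λ : Type*} (J : Λ → Set E)

theorem idealSeminorm_smul [IsScalarTower 𝕜 E E] (c : 𝕜) (a : E) :
    idealSeminorm J (c • a) = ‖c‖ * idealSeminorm J a := by
  rw [idealSeminorm, idealSeminorm, ← smul_eq_mul, ← Real.sSup_smul_of_nonneg (norm_nonneg c)]
  congr 1
  ext r
  simp [Set.mem_smul_set, smul_mul_assoc, norm_smul, eq_comm, and_assoc]

variable [SMulCommClass 𝕜 E E] (hsmul : ∀ l (c : 𝕜), ∀ x ∈ J l, c • x ∈ J l)
include hsmul

theorem norm_mul_le_idealSeminorm_mul_norm (a : E) {l : Λ} {x : E} (hx : x ∈ J l) :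
    ‖a * x‖ ≤ idealSeminorm J a * ‖x‖ := by
  rcases eq_or_ne x 0 with rfl | hx0
  · simp
  have hxpos : 0 < ‖x‖ := norm_pos_iff.2 hx0
  have h := norm_mul_le_idealSeminorm J a (hsmul l ((‖x‖⁻¹ : ℝ) : 𝕜) x hx)
    (by rw [norm_smul, RCLike.norm_ofReal, abs_inv, abs_norm, inv_mul_cancel₀ hxpos.ne'])
  rw [mul_smul_comm, norm_smul, RCLike.norm_ofReal, abs_inv, abs_norm] at h
  rw [mul_comm]
  exact (inv_mul_le_iff₀ hxpos).1 h

variable (hmul_left : ∀ l (a : E), ∀ x ∈ J l, a * x ∈ J l)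
include hmul_left

theorem idealSeminorm_mul_le (a b : E) :
    idealSeminorm J (a * b) ≤ idealSeminorm J a * idealSeminorm J b :=
  idealSeminorm_le J (mul_nonneg (idealSeminorm_nonneg J a) (idealSeminorm_nonneg J b))
    fun l x hx hx1 ↦ calc
      ‖a * b * x‖ = ‖a * (b * x)‖ := by rw [mul_assoc]
      _ ≤ idealSeminorm J a * ‖b * x‖ :=
        norm_mul_le_idealSeminorm_mul_norm J hsmul a (hmul_left l b x hx)
      _ ≤ idealSeminorm J a * idealSeminorm J b := mul_le_mul_of_nonneg_left
        (norm_mul_le_idealSeminorm J b hx hx1) (idealSeminorm_nonneg J a)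

variable [StarRing E] [CStarRing E]

theorem idealSeminorm_star_le (a : E) : idealSeminorm J (star a) ≤ idealSeminorm J a := by
  refine idealSeminorm_le J (idealSeminorm_nonneg J a) fun l x hx hx1 ↦ ?_
  have hy := hmul_left l (star a) x hx
  have hsq : ‖star a * x‖ ^ 2 ≤ idealSeminorm J a * ‖star a * x‖ := calc
    ‖star a * x‖ ^ 2 ≤ ‖a * (star a * x)‖ := by
      simpa only [star_star, mul_assoc] using sq_norm_mul_le_norm_star_mul_self_mul (star a) hx1
    _ ≤ idealSeminorm J a * ‖star a * x‖ := norm_mul_le_idealSeminorm_mul_norm J hsmul a hy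
  nlinarith [norm_nonneg (star a * x), idealSeminorm_nonneg J a]

theorem idealSeminorm_star (a : E) : idealSeminorm J (star a) = idealSeminorm J a :=
  le_antisymm (idealSeminorm_star_le J hsmul hmul_left a) <| by
    simpa only [star_star] using idealSeminorm_star_le J hsmul hmul_left (star a)

theorem idealSeminorm_star_mul_self (a : E) :
    idealSeminorm J (star a * a) = idealSeminorm J a ^ 2 := by
  refine le_antisymm ?_ ?_
  · simpa only [idealSeminorm_star J hsmul hmul_left, sq] using
      idealSeminorm_mul_le J hsmul hmul_left (star a) a
  · have h : idealSeminorm J a ≤ √(idealSeminorm J (star a * a)) :=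
      idealSeminorm_le J (Real.sqrt_nonneg _) fun l x hx hx1 ↦ Real.le_sqrt_of_sq_le <|
        (sq_norm_mul_le_norm_star_mul_self_mul a hx1).trans
          (norm_mul_le_idealSeminorm J _ hx hx1)
    exact (Real.le_sqrt (idealSeminorm_nonneg J a) (idealSeminorm_nonneg J _)).1 h

end NormedAlgebra

theorem idealSeminorm_is_cstar_seminorm_general {Λ : Type*} (J : Λ → Set A)
    (hclosed : ∀ l, IsClosed (J l))
    (hmul_left : ∀ l (a : A), ∀ x ∈ J l, a * x ∈ J l)
    (hmul_right : ∀ l (a : A), ∀ x ∈ J l, x * a ∈ J l) :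
    ∀ (a b : A) (c : ℂ),
      idealSeminorm J a ≤ ‖a‖ ∧
      idealSeminorm J (a + b) ≤ idealSeminorm J a + idealSeminorm J b ∧
      idealSeminorm J (c • a) = ‖c‖ * idealSeminorm J a ∧
      idealSeminorm J (a * b) ≤ idealSeminorm J a * idealSeminorm J b ∧
      idealSeminorm J (star a) = idealSeminorm J a ∧
      idealSeminorm J (star a * a) = (idealSeminorm J a) ^ 2 := by
  have hsmul (l) (c : ℂ) (x) (hx : x ∈ J l) : c • x ∈ J l :=
    smul_mem_of_isClosed_of_mul_mem (hclosed l) (hmul_right l) hx c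
  exact fun a b c ↦ ⟨idealSeminorm_le_norm J a, idealSeminorm_add_le J a b,
    idealSeminorm_smul J c a, idealSeminorm_mul_le J hsmul hmul_left a b,
    idealSeminorm_star J hsmul hmul_left a, idealSeminorm_star_mul_self J hsmul hmul_left a⟩

/-- If `{J_λ}` is a family of closed two-sided ideals of a C*-algebra `A`, then
`N(a) = sup { ‖a·x‖ : λ ∈ Λ, x ∈ J_λ, ‖x‖ ≤ 1 }` is a C*-seminorm bounded by the norm:
`N(a) ≤ ‖a‖`, `N(a + b) ≤ N(a) + N(b)`, `N(c • a) = |c| N(a)`, `N(a b) ≤ N(a) N(b)`,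
`N(a*) = N(a)` and `N(a* a) = N(a)²`. -/
theorem idealSeminorm_is_cstar_seminorm {Λ : Type*} (J : Λ → Set A)
    (hclosed : ∀ l, IsClosed (J l))
    (hzero : ∀ l, (0 : A) ∈ J l)
    (hadd : ∀ l, ∀ x ∈ J l, ∀ y ∈ J l, x + y ∈ J l)
    (hneg : ∀ l, ∀ x ∈ J l, -x ∈ J l)
    (hmul_left : ∀ l (a : A), ∀ x ∈ J l, a * x ∈ J l)
    (hmul_right : ∀ l (a : A), ∀ x ∈ J l, x * a ∈ J l) :
    ∀ (a b : A) (c : ℂ),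
      idealSeminorm J a ≤ ‖a‖ ∧
      idealSeminorm J (a + b) ≤ idealSeminorm J a + idealSeminorm J b ∧
      idealSeminorm J (c • a) = ‖c‖ * idealSeminorm J a ∧
      idealSeminorm J (a * b) ≤ idealSeminorm J a * idealSeminorm J b ∧
      idealSeminorm J (star a) = idealSeminorm J a ∧
      idealSeminorm J (star a * a) = (idealSeminorm J a) ^ 2 :=
  idealSeminorm_is_cstar_seminorm_general J hclosed hmul_left hmul_right
end

section
/- Let A be a C*-algebra, {J_λ}_{λ∈Λ} a family of closed two-sided ideals of A, and N(a) = sup { ‖a·x‖ : λ ∈ Λ, x ∈ J_λ, ‖x‖ ≤ 1 }. Let I be the closure of the linear span of ⋃_{λ∈Λ} J_λ in A. Then N is a norm (i.e. N(a) = 0 implies a = 0) if and only if I is an essential ideal of A, i.e. for every a ∈ A, if a·x = 0 for all x ∈ I then a = 0. Moreover, in that case N(a) = ‖a‖ for every a ∈ A. -/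
set_option maxHeartbeats 1000000

open Unitization in
lemma aux_norm_le {A : Type*} [NonUnitalCStarAlgebra A] {Λ : Type*} (J : Λ → Set A)
    (hmul_left : ∀ l (a : A), ∀ x ∈ J l, a * x ∈ J l)
    (a : A)
    (hess : ∀ y : A, y ≠ 0 → ∃ l, ∃ x ∈ J l, y * x ≠ 0) :
    ‖a‖ ≤ sSup {r : ℝ | ∃ l x, x ∈ J l ∧ ‖x‖ ≤ 1 ∧ r = ‖a * x‖} := by
  set S := {r : ℝ | ∃ l x, x ∈ J l ∧ ‖x‖ ≤ 1 ∧ r = ‖a * x‖} with hS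
  set N := sSup S with hN
  have hbdd : BddAbove S := by
    refine ⟨‖a‖, ?_⟩
    rintro r ⟨l, x, hx, hx1, rfl⟩
    calc ‖a * x‖ ≤ ‖a‖ * ‖x‖ := norm_mul_le a x
    _ ≤ ‖a‖ * 1 := by gcongr
    _ = ‖a‖ := mul_one _
  have hN0 : 0 ≤ N := Real.sSup_nonneg fun r hr => by
    obtain ⟨l, x, hx, hx1, rfl⟩ := hr; positivity
  have key : ∀ ε > (0:ℝ), ‖a‖ ^ 2 - ε ≤ N ^ 2 := by
    intro ε hε
    set c : A := star a * a with hc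
    have hca : IsSelfAdjoint c := .star_mul_self a
    have hnormc : ‖c‖ = ‖a‖ ^ 2 := by
      rw [hc, CStarRing.norm_star_mul_self, sq]
    rcases le_or_gt ‖c‖ ε with hle | hlt
    · nlinarith [sq_nonneg N]
    letI := CStarAlgebra.spectralOrder (Unitization ℂ A)
    haveI := CStarAlgebra.spectralOrderedRing (Unitization ℂ A)
    set g : ℝ → ℝ := fun t => ((t - (‖c‖ - ε)) ⊔ 0) / ε ⊓ 1 with hg
    have hgcont : Continuous g := by
      apply Continuous.min _ continuous_const
      exact ((continuous_id.sub continuous_const).max continuous_const).div_const ε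
    have hgnonneg : ∀ t, 0 ≤ g t := fun t =>
      le_min (div_nonneg (le_max_right _ _) hε.le) zero_le_one -- fix
    have hg0 : g 0 = 0 := by
      simp only [hg]
      rw [max_eq_right (by linarith), zero_div]
      exact min_eq_left zero_le_one
    have hg1 : g ‖c‖ = 1 := by
      simp only [hg]
      rw [max_eq_left (by linarith), sub_sub_cancel, div_self hε.ne']
      exact min_self 1
    have hgsmall : ∀ t, g t ≠ 0 → ‖c‖ - ε ≤ t := by
      intro t ht
      by_contra hlt'
      push_neg at hlt'
      apply ht
      simp only [hg]
      rw [max_eq_right (by linarith), zero_div]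
      exact min_eq_left zero_le_one
    set y : A := cfcₙ g c with hy
    have hcB : (0 : Unitization ℂ A) ≤ (c : Unitization ℂ A) := by
      have h5 : ((star a * a : A) : Unitization ℂ A) = star (a : Unitization ℂ A) * a := by
        rw [Unitization.inr_mul, Unitization.inr_star]
      rw [hc, h5]
      exact star_mul_self_nonneg _
    have hyB : (y : Unitization ℂ A) = cfc g ((c : Unitization ℂ A)) :=
      Unitization.real_cfcₙ_eq_cfc_inr c g hg0
    have hy0 : y ≠ 0 := by
      intro h0
      have hmem : ‖c‖ ∈ spectrum ℝ ((c : Unitization ℂ A)) := by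
        have := CStarAlgebra.norm_mem_spectrum_of_nonneg hcB
        rwa [Unitization.norm_inr] at this
      have h1 : ‖g ‖c‖‖ ≤ ‖cfc g ((c : Unitization ℂ A))‖ :=
        norm_apply_le_norm_cfc g _ hmem (hgcont.continuousOn) (.of_nonneg hcB)
      rw [← hyB, h0, hg1] at h1
      norm_num at h1
    obtain ⟨l, x, hxJ, hzx⟩ := hess y hy0
    set z : A := y * x with hz
    have hznorm : (0:ℝ) < ‖z‖ := norm_pos_iff.2 hzx
    set u : A := ((‖z‖ : ℂ)⁻¹) • z with hu
    have huJ : u ∈ J l := by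
      have h2 : u = (((‖z‖ : ℂ)⁻¹) • y) * x := by rw [hu, hz, smul_mul_assoc]
      rw [h2]; exact hmul_left l _ x hxJ
    have hun : ‖u‖ = 1 := by
      rw [hu, norm_smul]
      simp [hznorm.ne']
    have hauS : ‖a * u‖ ∈ S := ⟨l, u, huJ, hun.le, rfl⟩
    have hau_le : ‖a * u‖ ≤ N := le_csSup hbdd hauS
    set s : ℝ := Real.sqrt (‖c‖ - ε) with hs
    have hs0 : 0 ≤ s := Real.sqrt_nonneg _
    have hs2 : s ^ 2 = ‖c‖ - ε := Real.sq_sqrt (by linarith)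
    -- the operator inequality
    set d : A := cfcₙ (fun t => s * g t) c with hd
    have hdy : d = s • y := by
      rw [hd, hy, ← cfcₙ_smul s g c (hgcont.continuousOn) hg0]
      simp [smul_eq_mul]
    have hineq : star ((d * x : A) : Unitization ℂ A) * ((d * x : A) : Unitization ℂ A) ≤
        star ((a * z : A) : Unitization ℂ A) * ((a * z : A) : Unitization ℂ A) := by
      have hdB : (d : Unitization ℂ A) = cfc (fun t => s * g t) ((c : Unitization ℂ A)) :=
        Unitization.real_cfcₙ_eq_cfc_inr c _ (by simp [hg0])
      have hysa : IsSelfAdjoint (cfc g ((c : Unitization ℂ A))) := cfc_predicate g _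
      have hdsa : IsSelfAdjoint (cfc (fun t => s * g t) ((c : Unitization ℂ A))) :=
        cfc_predicate _ _
      have hpt : ∀ t ∈ spectrum ℝ ((c : Unitization ℂ A)),
          (s * g t) * (s * g t) ≤ g t * t * g t := by
        intro t ht
        have ht0 : 0 ≤ t := spectrum_nonneg_of_nonneg hcB ht
        by_cases hgt : g t = 0
        · simp [hgt]
        · have h9 : ‖c‖ - ε ≤ t := hgsmall t hgt
          have h10 : 0 ≤ g t := hgnonneg t
          nlinarith [hs2, sq_nonneg (g t)]
      have h7 : cfc (fun t => (s * g t) * (s * g t)) ((c : Unitization ℂ A)) ≤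
          cfc (fun t => g t * t * g t) ((c : Unitization ℂ A)) :=
        cfc_mono hpt (by fun_prop) (by fun_prop)
      rw [cfc_mul (fun t => s * g t) (fun t => s * g t) _ (by fun_prop) (by fun_prop)] at h7
      rw [cfc_mul (fun t => g t * t) g _ (by fun_prop) (by fun_prop),
        cfc_mul g (fun t => t) _ (by fun_prop) (by fun_prop),
        cfc_id' ℝ ((c : Unitization ℂ A))] at h7
      have h8 := star_left_conjugate_le_conjugate h7 ((x : A) : Unitization ℂ A)
      have e1 : star ((d * x : A) : Unitization ℂ A) * ((d * x : A) : Unitization ℂ A) =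
          star ((x : A) : Unitization ℂ A) *
            (cfc (fun t => s * g t) ((c : Unitization ℂ A)) *
              cfc (fun t => s * g t) ((c : Unitization ℂ A))) * ((x : A) : Unitization ℂ A) := by
        rw [Unitization.inr_mul, hdB, star_mul, hdsa.star_eq]
        simp [mul_assoc]
      have e2 : star ((a * z : A) : Unitization ℂ A) * ((a * z : A) : Unitization ℂ A) =
          star ((x : A) : Unitization ℂ A) *
            (cfc g ((c : Unitization ℂ A)) * (c : Unitization ℂ A) *
              cfc g ((c : Unitization ℂ A))) * ((x : A) : Unitization ℂ A) := by
        have hzB : ((z : A) : Unitization ℂ A) =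
            cfc g ((c : Unitization ℂ A)) * ((x : A) : Unitization ℂ A) := by
          rw [hz, Unitization.inr_mul, hyB]
        have hcB' : ((c : A) : Unitization ℂ A) =
            star ((a : A) : Unitization ℂ A) * ((a : A) : Unitization ℂ A) := by
          rw [hc, Unitization.inr_mul, Unitization.inr_star]
        rw [Unitization.inr_mul, hzB, star_mul, star_mul, hysa.star_eq]
        simp [mul_assoc, hcB']
      rw [e1, e2]
      exact h8
    have hnorm_le : ‖d * x‖ ≤ ‖a * z‖ := by
      have h3 := CStarAlgebra.norm_le_norm_of_nonneg_of_le (star_mul_self_nonneg _) hineq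
      rw [CStarRing.norm_star_mul_self, CStarRing.norm_star_mul_self,
        Unitization.norm_inr, Unitization.norm_inr] at h3
      exact nonneg_le_nonneg_of_sq_le_sq (norm_nonneg _) (by rw [← sq, ← sq] at h3 ⊢; exact h3)
    have hdx : d * x = s • z := by rw [hdy, smul_mul_assoc, hz]
    have hsz : s * ‖z‖ ≤ ‖a * z‖ := by
      calc s * ‖z‖ = ‖s • z‖ := by rw [norm_smul, Real.norm_of_nonneg hs0]
      _ = ‖d * x‖ := by rw [hdx]
      _ ≤ ‖a * z‖ := hnorm_le
    have hau : s ≤ ‖a * u‖ := by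
      rw [hu, mul_smul_comm, norm_smul]
      simp only [norm_inv, Complex.norm_real, Real.norm_of_nonneg (norm_nonneg z)]
      rw [le_inv_mul_iff₀ hznorm]
      linarith [hsz]
    have : s ≤ N := le_trans hau hau_le
    calc ‖a‖ ^ 2 - ε = ‖c‖ - ε := by rw [hnormc]
    _ = s ^ 2 := hs2.symm
    _ ≤ N ^ 2 := by gcongr
  have h4 : ‖a‖ ^ 2 ≤ N ^ 2 := le_of_forall_sub_le key
  calc ‖a‖ = Real.sqrt (‖a‖ ^ 2) := (Real.sqrt_sq (norm_nonneg a)).symm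
  _ ≤ Real.sqrt (N ^ 2) := Real.sqrt_le_sqrt h4
  _ = N := Real.sqrt_sq hN0

variable {A : Type*} [NonUnitalNormedRing A] [StarRing A] [CStarRing A]
  [NormedSpace ℂ A] [IsScalarTower ℂ A A] [SMulCommClass ℂ A A]
  [StarModule ℂ A] [CompleteSpace A]

/-- Let `{J_λ}` be a family of closed two-sided ideals of a C*-algebra `A`, let
`N = idealSeminorm J`, and let `I` be the closure of the linear span of `⋃ J_λ`.
Then `N` is a norm (i.e. `N a = 0 → a = 0`) if and only if `I` is an essential ideal
of `A` (i.e. `a • I = 0 → a = 0`), and in that case `N` coincides with the norm of `A`. -/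
theorem idealSeminorm_norm_iff_essential {Λ : Type*} (J : Λ → Set A)
    (hclosed : ∀ l, IsClosed (J l))
    (hzero : ∀ l, (0 : A) ∈ J l)
    (hadd : ∀ l, ∀ x ∈ J l, ∀ y ∈ J l, x + y ∈ J l)
    (hneg : ∀ l, ∀ x ∈ J l, -x ∈ J l)
    (hmul_left : ∀ l (a : A), ∀ x ∈ J l, a * x ∈ J l)
    (hmul_right : ∀ l (a : A), ∀ x ∈ J l, x * a ∈ J l)
    (I : Set A) (hI : I = closure (Submodule.span ℂ (⋃ l, J l) : Set A)) :
    ((∀ a : A, idealSeminorm J a = 0 → a = 0) ↔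
      (∀ a : A, (∀ x ∈ I, a * x = 0) → a = 0)) ∧
    ((∀ a : A, (∀ x ∈ I, a * x = 0) → a = 0) →
      ∀ a : A, idealSeminorm J a = ‖a‖) := by
  letI : NonUnitalCStarAlgebra A := {}
  have hsub : ∀ l, J l ⊆ I := by
    intro l x hx
    rw [hI]
    exact subset_closure (Submodule.subset_span (Set.mem_iUnion.2 ⟨l, hx⟩))
  have hbridge : ∀ a : A, (∀ l, ∀ x ∈ J l, a * x = 0) → ∀ x ∈ I, a * x = 0 := by
    intro a ha x hx
    have hKclosed : IsClosed {v : A | a * v = 0} :=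
      isClosed_singleton.preimage (continuous_mul_left a)
    rw [hI] at hx
    have hspan : (Submodule.span ℂ (⋃ l, J l) : Set A) ⊆ {v : A | a * v = 0} := by
      intro v hv
      induction hv using Submodule.span_induction with
      | mem w hw =>
        obtain ⟨s, ⟨l, rfl⟩, hl⟩ := hw
        exact ha l w hl
      | zero => exact mul_zero a
      | add w₁ w₂ _ _ h₁ h₂ => show a * (w₁ + w₂) = 0; rw [mul_add, h₁, h₂, add_zero]
      | smul r w _ hw => show a * (r • w) = 0; rw [mul_smul_comm, hw, smul_zero]
    exact closure_minimal hspan hKclosed hx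
  have hSnonneg : ∀ a : A, (0:ℝ) ≤ idealSeminorm J a := fun a =>
    Real.sSup_nonneg fun r hr => by obtain ⟨l, v, hv, hv1, rfl⟩ := hr; positivity
  have hSbdd : ∀ a : A, BddAbove {r : ℝ | ∃ l x, x ∈ J l ∧ ‖x‖ ≤ 1 ∧ r = ‖a * x‖} := by
    intro a
    refine ⟨‖a‖, ?_⟩
    rintro r ⟨l, v, hv, hv1, rfl⟩
    calc ‖a * v‖ ≤ ‖a‖ * ‖v‖ := norm_mul_le a v
    _ ≤ ‖a‖ * 1 := by gcongr
    _ = ‖a‖ := mul_one _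
  have hann : ∀ a : A, idealSeminorm J a = 0 → ∀ l, ∀ x ∈ J l, a * x = 0 := by
    intro a hNa
    have hball : ∀ l, ∀ w ∈ J l, ‖w‖ ≤ 1 → a * w = 0 := by
      intro l w hw hw1
      have h1 : ‖a * w‖ ≤ idealSeminorm J a := le_csSup (hSbdd a) ⟨l, w, hw, hw1, rfl⟩
      rw [hNa] at h1
      exact norm_le_zero_iff.1 h1
    have hright : ∀ l, ∀ x ∈ J l, ∀ c : A, a * (x * c) = 0 := by
      intro l x hx c
      by_cases hxc : x * c = 0
      · rw [hxc, mul_zero]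
      · set r : ℂ := (‖x * c‖ : ℂ)⁻¹ with hr
        have hr0 : r ≠ 0 := by
          simp [hr, norm_ne_zero_iff.2 hxc]
        have hmem : x * (r • c) ∈ J l := hmul_right l _ x hx
        have hnorm : ‖x * (r • c)‖ ≤ 1 := by
          rw [mul_smul_comm, norm_smul, hr]
          simp [norm_ne_zero_iff.2 hxc]
        have h0 := hball l _ hmem hnorm
        rw [mul_smul_comm, mul_smul_comm] at h0
        exact (smul_eq_zero.1 h0).resolve_left hr0
      -- end
    intro l x hx
    have h2 := hright l x hx (star (a * x))
    rw [← mul_assoc] at h2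
    have h3 : ‖a * x‖ * ‖a * x‖ = 0 := by
      rw [← CStarRing.norm_self_mul_star, h2, norm_zero]
    have h4 : ‖a * x‖ = 0 := by
      rcases mul_self_eq_zero.1 h3 with h
      exact h
    exact norm_eq_zero.1 h4
  refine ⟨⟨?_, ?_⟩, ?_⟩
  · intro hN a ha
    apply hN a
    refine le_antisymm (Real.sSup_le ?_ le_rfl) (hSnonneg a)
    rintro r ⟨l, v, hv, hv1, rfl⟩
    rw [ha v (hsub l hv), norm_zero]
  · intro hess a hNa
    exact hess a (hbridge a (hann a hNa))
  · intro hess a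
    refine le_antisymm (Real.sSup_le ?_ (norm_nonneg a)) ?_
    · rintro r ⟨l, v, hv, hv1, rfl⟩
      calc ‖a * v‖ ≤ ‖a‖ * ‖v‖ := norm_mul_le a v
      _ ≤ ‖a‖ * 1 := by gcongr
      _ = ‖a‖ := mul_one _
    · have hess' : ∀ y : A, y ≠ 0 → ∃ l, ∃ x ∈ J l, y * x ≠ 0 := by
        intro y hy
        by_contra hcon
        push_neg at hcon
        exact hy (hess y (hbridge y hcon))
      exact aux_norm_le J hmul_left a hess'
end

section
/- Let G be a locally compact Hausdorff group, let α = ({D_t}_{t∈G}, {α_t}_{t∈G}) be a partial action of G on a C*-algebra A, and suppose β and γ are continuous actions of G on C*-algebras B and C, respectively, together with injective *-homomorphisms ι_B : A → B and ι_C : A → C whose ranges are closed two-sided ideals, such that for every t ∈ G: ι_B(D_t) = ι_B(A) ∩ β_t(ι_B(A)), ι_C(D_t) = ι_C(A) ∩ γ_t(ι_C(A)), and β_t(ι_B(a)) = ι_B(α_t(a)), γ_t(ι_C(a)) = ι_C(α_t(a)) for all a ∈ D_{t⁻¹}. Then for every t ∈ G and all a, b ∈ A, the products β_t(ι_B(a))·ι_B(b)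 and γ_t(ι_C(a))·ι_C(b) lie in ι_B(D_t) and ι_C(D_t) respectively, and they correspond to the same element of A: there exists d ∈ D_t with ι_B(d) = β_t(ι_B(a))·ι_B(b) and ι_C(d) = γ_t(ι_C(a))·ι_C(b). -/
/-!
Both products land in the image of `D_t`, say as `d_B` and `d_C`. Writing an element of `D_t`
as `α_t e` with `e ∈ D_{t⁻¹}`, the covariance `β_t ∘ ι_B = ι_B ∘ α_t` computes
`α_t e · d_B = α_t (e a) · b` inside `A`, and likewise for `d_C`. Hence `d_B - d_C` lies in the
ideal `D_t` and is annihilated by it from the left, which in a C*-algebra forces it to vanish.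
-/

/-- A partial action of a topological group `G` on a (not necessarily unital) C*-algebra
`A`: a family of closed two-sided ideals `dom t` together with maps `act t` restricting
to *-isomorphisms `dom t⁻¹ → dom t`, such that `dom 1 = A`, `act 1 = id`,
`act (s * t)` extends `act s ∘ act t`, the family of ideals is continuous (every open
set hits an open set of indices), and `(t, x) ↦ act t x` is continuous. -/
structure CStarPartialAction (G A : Type*) [Group G] [TopologicalSpace G]
    [NonUnitalNormedRing A] [StarRing A] [NormedSpace ℂ A] where
  dom : G → Set A
  act : G → A → A
  isClosed_dom : ∀ t, IsClosed (dom t)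
  zero_mem : ∀ t, (0 : A) ∈ dom t
  add_mem : ∀ t, ∀ x ∈ dom t, ∀ y ∈ dom t, x + y ∈ dom t
  smul_mem : ∀ t (c : ℂ), ∀ x ∈ dom t, c • x ∈ dom t
  mul_mem_left : ∀ t (a : A), ∀ x ∈ dom t, a * x ∈ dom t
  mul_mem_right : ∀ t (a : A), ∀ x ∈ dom t, x * a ∈ dom t
  bijOn : ∀ t, Set.BijOn (act t) (dom t⁻¹) (dom t)
  act_add : ∀ t, ∀ x ∈ dom t⁻¹, ∀ y ∈ dom t⁻¹, act t (x + y) = act t x + act t y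
  act_smul : ∀ t (c : ℂ), ∀ x ∈ dom t⁻¹, act t (c • x) = c • act t x
  act_mul : ∀ t, ∀ x ∈ dom t⁻¹, ∀ y ∈ dom t⁻¹, act t (x * y) = act t x * act t y
  act_star : ∀ t, ∀ x ∈ dom t⁻¹, act t (star x) = star (act t x)
  dom_one : dom 1 = Set.univ
  act_one : ∀ x, act 1 x = x
  act_comp : ∀ s t x, x ∈ dom t⁻¹ → act t x ∈ dom s⁻¹ →
    x ∈ dom (s * t)⁻¹ ∧ act (s * t) x = act s (act t x)
  isOpen_hit : ∀ U : Set A, IsOpen U → IsOpen {t : G | (U ∩ dom t).Nonempty}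
  continuousOn : ContinuousOn (fun p : G × A => act p.1 p.2) {p : G × A | p.2 ∈ dom p.1⁻¹}

/-- A continuous (global) action of a topological group `G` on a C*-algebra `B` by
*-automorphisms: each `β t` is a *-homomorphism, `β 1 = id`, `β s ∘ β t = β (s * t)`
(so each `β t` is bijective), and `t ↦ β t b` is continuous for every `b`. -/
def IsContCStarAction (G B : Type*) [Group G] [TopologicalSpace G]
    [NonUnitalNormedRing B] [StarRing B] [NormedSpace ℂ B] (β : G → B → B) : Prop :=
  (∀ t (x y : B), β t (x + y) = β t x + β t y) ∧
  (∀ t (c : ℂ) (x : B), β t (c • x) = c • β t x) ∧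
  (∀ t (x y : B), β t (x * y) = β t x * β t y) ∧
  (∀ t (x : B), β t (star x) = star (β t x)) ∧
  (∀ x : B, β 1 x = x) ∧
  (∀ s t (x : B), β s (β t x) = β (s * t) x) ∧
  (∀ x : B, Continuous fun t => β t x)

variable {G : Type*} [Group G] [TopologicalSpace G] [IsTopologicalGroup G]
  [LocallyCompactSpace G] [T2Space G]
variable {A : Type*} [NonUnitalNormedRing A] [StarRing A] [CStarRing A]
  [NormedSpace ℂ A] [IsScalarTower ℂ A A] [SMulCommClass ℂ A A]
  [StarModule ℂ A] [CompleteSpace A]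
variable {B : Type*} [NonUnitalNormedRing B] [StarRing B] [CStarRing B]
  [NormedSpace ℂ B] [IsScalarTower ℂ B B] [SMulCommClass ℂ B B]
  [StarModule ℂ B] [CompleteSpace B]
variable {C : Type*} [NonUnitalNormedRing C] [StarRing C] [CStarRing C]
  [NormedSpace ℂ C] [IsScalarTower ℂ C C] [SMulCommClass ℂ C C]
  [StarModule ℂ C] [CompleteSpace C]

theorem CStarRing.eq_zero_of_mul_star_mul_self_eq_zero {E : Type*} [NonUnitalNormedRing E]
    [StarRing E] [CStarRing E] {z : E} (h : z * star z * z = 0) : z = 0 := by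
  have hsq : (star z * z) * (star z * z) = 0 := by
    rw [show (star z * z) * (star z * z) = star z * (z * star z * z) by simp only [mul_assoc],
      h, mul_zero]
  have hnorm : ‖star z * z‖ ^ 2 = 0 := by
    rw [← (IsSelfAdjoint.star_mul_self z).norm_mul_self, hsq, norm_zero]
  exact (CStarRing.star_mul_self_eq_zero_iff z).1
    (norm_eq_zero.1 ((pow_eq_zero_iff two_ne_zero).1 hnorm))

namespace IsContCStarAction

omit [IsTopologicalGroup G] [LocallyCompactSpace G] [T2Space G] [CStarRing B]
  [IsScalarTower ℂ B B] [SMulCommClass ℂ B B] [StarModule ℂ B] [CompleteSpace B]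

variable {β : G → B → B}

theorem map_mul (hβ : IsContCStarAction G B β) (t : G) (x y : B) :
    β t (x * y) = β t x * β t y :=
  hβ.2.2.1 t x y

theorem apply_inv_apply (hβ : IsContCStarAction G B β) (t : G) (x : B) :
    β t (β t⁻¹ x) = x := by
  rw [hβ.2.2.2.2.2.1, mul_inv_cancel, hβ.2.2.2.2.1]

end IsContCStarAction

namespace CStarPartialAction

omit [IsTopologicalGroup G] [LocallyCompactSpace G] [T2Space G]
  [IsScalarTower ℂ A A] [SMulCommClass ℂ A A] [StarModule ℂ A] [CompleteSpace A]
  [CStarRing B] [IsScalarTower ℂ B B] [SMulCommClass ℂ B B] [StarModule ℂ B] [CompleteSpace B]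

variable (α : CStarPartialAction G A)

section

omit [CStarRing A]

theorem sub_mem (t : G) {x y : A} (hx : x ∈ α.dom t) (hy : y ∈ α.dom t) :
    x - y ∈ α.dom t := by
  rw [sub_eq_add_neg, ← neg_one_smul ℂ y]
  exact α.add_mem t x hx _ (α.smul_mem t (-1) y hy)

variable {β : G → B → B} (ι : A →⋆ₙₐ[ℂ] B)

theorem act_mul_mem_image_dom (hβ : IsContCStarAction G B β)
    (hι_left : ∀ b : B, ∀ x ∈ Set.range ι, b * x ∈ Set.range ι)
    (hι_right : ∀ b : B, ∀ x ∈ Set.range ι, x * b ∈ Set.range ι)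
    (hdom : ∀ t, ι '' α.dom t = Set.range ι ∩ (β t '' Set.range ι)) (t : G) (a b : A) :
    β t (ι a) * ι b ∈ ι '' α.dom t := by
  rw [hdom]
  refine ⟨hι_left _ _ ⟨b, rfl⟩, ι a * β t⁻¹ (ι b), hι_right _ _ ⟨a, rfl⟩, ?_⟩
  rw [hβ.map_mul, hβ.apply_inv_apply]

theorem act_mul_eq_of_map_eq (hβ : IsContCStarAction G B β) (hι_inj : Function.Injective ι)
    (hres : ∀ t, ∀ a ∈ α.dom t⁻¹, β t (ι a) = ι (α.act t a))
    {t : G} {a b d : A} (hd : ι d = β t (ι a) * ι b) {e : A} (he : e ∈ α.dom t⁻¹) :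
    α.act t e * d = α.act t (e * a) * b := by
  apply hι_inj
  rw [map_mul, hd, ← hres t e he, map_mul, ← hres t _ (α.mul_mem_right _ a e he), map_mul,
    hβ.map_mul, mul_assoc]

end

theorem eq_of_forall_mul_eq {t : G} {x y : A} (hx : x ∈ α.dom t) (hy : y ∈ α.dom t)
    (h : ∀ f ∈ α.dom t, f * x = f * y) : x = y := by
  have hz := α.sub_mem t hx hy
  have hzz : (x - y) * star (x - y) * (x - y) = 0 := by
    rw [mul_sub, h _ (α.mul_mem_right t _ _ hz), sub_self]
  exact sub_eq_zero.1 (CStarRing.eq_zero_of_mul_star_mul_self_eq_zero hzz)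

end CStarPartialAction

theorem CStarPartialAction.envelope_products_agree_general
    (α : CStarPartialAction G A)
    (β : G → B → B) (hβ : IsContCStarAction G B β)
    (γ : G → C → C) (hγ : IsContCStarAction G C γ)
    (ιB : A →⋆ₙₐ[ℂ] B) (ιC : A →⋆ₙₐ[ℂ] C)
    (hιB_inj : Function.Injective ιB) (hιC_inj : Function.Injective ιC)
    (hιB_left : ∀ b : B, ∀ x ∈ Set.range ιB, b * x ∈ Set.range ιB)
    (hιB_right : ∀ b : B, ∀ x ∈ Set.range ιB, x * b ∈ Set.range ιB)
    (hιC_left : ∀ c : C, ∀ x ∈ Set.range ιC, c * x ∈ Set.range ιC)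
    (hιC_right : ∀ c : C, ∀ x ∈ Set.range ιC, x * c ∈ Set.range ιC)
    (hB_dom : ∀ t, ιB '' α.dom t = Set.range ιB ∩ (β t '' Set.range ιB))
    (hC_dom : ∀ t, ιC '' α.dom t = Set.range ιC ∩ (γ t '' Set.range ιC))
    (hB_res : ∀ t, ∀ a ∈ α.dom t⁻¹, β t (ιB a) = ιB (α.act t a))
    (hC_res : ∀ t, ∀ a ∈ α.dom t⁻¹, γ t (ιC a) = ιC (α.act t a)) :
    ∀ (t : G) (a b : A), ∃ d ∈ α.dom t,
      ιB d = β t (ιB a) * ιB b ∧ ιC d = γ t (ιC a) * ιC b := by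
  intro t a b
  obtain ⟨dB, hdB, hdB_eq⟩ := α.act_mul_mem_image_dom ιB hβ hιB_left hιB_right hB_dom t a b
  obtain ⟨dC, hdC, hdC_eq⟩ := α.act_mul_mem_image_dom ιC hγ hιC_left hιC_right hC_dom t a b
  have hd : dB = dC := α.eq_of_forall_mul_eq hdB hdC fun f hf => by
    obtain ⟨e, he, rfl⟩ := (α.bijOn t).surjOn hf
    rw [α.act_mul_eq_of_map_eq ιB hβ hιB_inj hB_res hdB_eq he,
      α.act_mul_eq_of_map_eq ιC hγ hιC_inj hC_res hdC_eq he]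
  exact ⟨dB, hdB, hdB_eq, hd ▸ hdC_eq⟩

/-- If `(β, B, ι_B)` and `(γ, C, ι_C)` are two enveloping actions of a partial action
`α` of `G` on `A` (realizing `A` as a closed two-sided ideal on which the global action
restricts to `α`), then for every `t ∈ G` and `a b ∈ A` the products
`β_t(ι_B a) · ι_B b` and `γ_t(ι_C a) · ι_C b` lie in `ι_B(D_t)`, `ι_C(D_t)` respectively
and correspond to the same element `d ∈ D_t` of `A`. -/
theorem CStarPartialAction.envelope_products_agree
    (α : CStarPartialAction G A)
    (β : G → B → B) (hβ : IsContCStarAction G B β)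
    (γ : G → C → C) (hγ : IsContCStarAction G C γ)
    (ιB : A →⋆ₙₐ[ℂ] B) (ιC : A →⋆ₙₐ[ℂ] C)
    (hιB_inj : Function.Injective ιB) (hιC_inj : Function.Injective ιC)
    (hιB_closed : IsClosed (Set.range ιB)) (hιC_closed : IsClosed (Set.range ιC))
    (hιB_left : ∀ b : B, ∀ x ∈ Set.range ιB, b * x ∈ Set.range ιB)
    (hιB_right : ∀ b : B, ∀ x ∈ Set.range ιB, x * b ∈ Set.range ιB)
    (hιC_left : ∀ c : C, ∀ x ∈ Set.range ιC, c * x ∈ Set.range ιC)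
    (hιC_right : ∀ c : C, ∀ x ∈ Set.range ιC, x * c ∈ Set.range ιC)
    (hB_dom : ∀ t, ιB '' α.dom t = Set.range ιB ∩ (β t '' Set.range ιB))
    (hC_dom : ∀ t, ιC '' α.dom t = Set.range ιC ∩ (γ t '' Set.range ιC))
    (hB_res : ∀ t, ∀ a ∈ α.dom t⁻¹, β t (ιB a) = ιB (α.act t a))
    (hC_res : ∀ t, ∀ a ∈ α.dom t⁻¹, γ t (ιC a) = ιC (α.act t a)) :
    ∀ (t : G) (a b : A), ∃ d ∈ α.dom t,
      ιB d = β t (ιB a) * ιB b ∧ ιC d = γ t (ιC a) * ιC b :=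
  CStarPartialAction.envelope_products_agree_general α β hβ γ hγ ιB ιC hιB_inj hιC_inj hιB_left
    hιB_right hιC_left hιC_right hB_dom hC_dom hB_res hC_res
end

section
/- Let B be a C*-algebra and A ⊆ B a closed two-sided ideal which is commutative, i.e. x·y = y·x for all x, y ∈ A. Then A is contained in the center of B: a·b = b·a for every a ∈ A and b ∈ B. -/
/-- A commutative closed two-sided ideal `A` of a C*-algebra `B` is contained in the
center of `B`: every element of `A` commutes with every element of `B`. -/
theorem comm_ideal_subset_center {B : Type*} [NonUnitalNormedRing B] [StarRing B]
    [CStarRing B] [NormedSpace ℂ B] [IsScalarTower ℂ B B] [SMulCommClass ℂ B B]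
    [StarModule ℂ B] [CompleteSpace B]
    (A : Set B) (hclosed : IsClosed A)
    (hzero : (0 : B) ∈ A)
    (hadd : ∀ x ∈ A, ∀ y ∈ A, x + y ∈ A)
    (hneg : ∀ x ∈ A, -x ∈ A)
    (hmul_left : ∀ b : B, ∀ x ∈ A, b * x ∈ A)
    (hmul_right : ∀ b : B, ∀ x ∈ A, x * b ∈ A)
    (hcomm : ∀ x ∈ A, ∀ y ∈ A, x * y = y * x) :
    ∀ a ∈ A, ∀ b : B, a * b = b * a := by
  -- Key: every element z of A commutes with star z * z ∈ A, hence ‖z * z‖ = ‖z‖ ^ 2.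
  have key : ∀ z ∈ A, ‖z * z‖ = ‖z‖ ^ 2 := by
    intro z hz
    have hzz : z * (star z * z) = (star z * z) * z :=
      hcomm z hz _ (hmul_left (star z) z hz)
    have h1 : star (z * z) * (z * z) = star (star z * z) * (star z * z) := by
      calc star (z * z) * (z * z) = star z * (star z * (z * z)) := by
            rw [star_mul, mul_assoc]
        _ = star z * ((star z * z) * z) := by rw [mul_assoc]
        _ = star z * (z * (star z * z)) := by rw [hzz]
        _ = (star z * z) * (star z * z) := by rw [← mul_assoc]
        _ = star (star z * z) * (star z * z) := by rw [star_mul, star_star]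
    have h2 : ‖z * z‖ * ‖z * z‖ = (‖z‖ * ‖z‖) * (‖z‖ * ‖z‖) := by
      rw [← CStarRing.norm_star_mul_self (x := z * z), h1,
        CStarRing.norm_star_mul_self (x := star z * z), CStarRing.norm_star_mul_self (x := z)]
    have h3 : ‖z * z‖ = ‖z‖ * ‖z‖ :=
      (mul_self_inj (norm_nonneg _) (by positivity)).mp h2
    rw [h3, sq]
  intro a ha b
  have hab : a * b ∈ A := hmul_right b a ha
  have hba : b * a ∈ A := hmul_left b a ha
  set c := a * b - b * a with hc
  have hcA : c ∈ A := by
    rw [hc, sub_eq_add_neg]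
    exact hadd _ hab _ (hneg _ hba)
  have hac : a * c = 0 := by
    rw [hc, mul_sub, hcomm a ha _ hab, mul_assoc, sub_self]
  have hca : c * a = 0 := by
    rw [hcomm c hcA a ha, hac]
  have hcc : c * c = a * (b * c) := by
    calc c * c = (a * b - b * a) * c := by rw [hc]
      _ = a * b * c - b * (a * c) := by noncomm_ring
      _ = a * (b * c) := by rw [hac, mul_zero, sub_zero, mul_assoc]
  have hc3 : c * (c * c) = 0 := by
    rw [hcc, ← mul_assoc, hca, zero_mul]
  have hc4 : (c * c) * (c * c) = 0 := by
    rw [mul_assoc, hc3, mul_zero]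
  have hccA : c * c ∈ A := hmul_left c c hcA
  have h5 : (‖c‖ ^ 2) ^ 2 = 0 := by
    rw [← key c hcA, ← key (c * c) hccA, hc4, norm_zero]
  have h6 : c = 0 := by
    have h7 : ‖c‖ = 0 :=
      pow_eq_zero_iff (n := 2) (by norm_num) |>.mp
        (pow_eq_zero_iff (n := 2) (by norm_num) |>.mp h5)
    exact norm_eq_zero.mp h7
  exact sub_eq_zero.mp h6
end

section
/- Let G be a discrete amenable group, H a complex Hilbert space, and u : G → B(H) a partial representation of G on H. Then u is a positive definite map: for every n ∈ ℕ, every t : Fin n → G and every h : Fin n → H, the complex number ∑_{i,j} ⟪h_i, u((t_i)⁻¹ · t_j) h_j⟫ is real and nonnegative. -/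
open scoped BoundedContinuousFunction ComplexOrder

/-- A left-invariant mean on the bounded (real-valued) functions on a discrete group
`G`: a positive linear functional `m` with `m 1 = 1` which is invariant under left
translations. -/
def IsLeftInvariantMean (G : Type*) [Group G] [TopologicalSpace G] [DiscreteTopology G]
    (m : (G →ᵇ ℝ) →ₗ[ℝ] ℝ) : Prop :=
  (∀ f : G →ᵇ ℝ, (∀ t, 0 ≤ f t) → 0 ≤ m f) ∧
  m 1 = 1 ∧
  ∀ (g : G) (f f' : G →ᵇ ℝ), (∀ t, f' t = f (g⁻¹ * t)) → m f' = m f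

/-- A partial representation of a group `G` on a Hilbert space `H`: a map
`u : G → B(H)` with `u 1 = 1`, `u t⁻¹ = (u t)*`, and `u s u t u t⁻¹ = u (s t) u t⁻¹`. -/
def IsPartialRepresentation {G : Type*} [Group G] {H : Type*} [NormedAddCommGroup H]
    [InnerProductSpace ℂ H] [CompleteSpace H] (u : G → H →L[ℂ] H) : Prop :=
  u 1 = 1 ∧
  (∀ t, u t⁻¹ = ContinuousLinearMap.adjoint (u t)) ∧
  ∀ s t, u s ∘L u t ∘L u t⁻¹ = u (s * t) ∘L u t⁻¹

/-! The form `Q_t(v) = ∑ᵢⱼ ⟪vᵢ, u(tᵢ⁻¹tⱼ)vⱼ⟫` splits off a square. With the star projections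
`pₐ = u(a)* u(a)`, the relations `u(a⁻¹b)(1 - p_b) = (1 - pₐ)u(a⁻¹b)` and
`pₐu(a⁻¹b) = u(a)* u(b)` give `Q_t(v) = ‖∑ⱼ u(tⱼ)vⱼ‖² + Q_t(w)` with `wⱼ = (1 - p_{tⱼ})vⱼ`,
and `‖wⱼ‖ ≤ ‖vⱼ‖`. As `Q_t` depends only on the products `tᵢ⁻¹tⱼ`, the same holds with `t`
replaced by `tₖ⁻¹t` for each `k`.
Let `β` be the infimum of `Re Q_t` over `{w | ∀ j, ‖wⱼ‖ ≤ ‖vⱼ‖}`. At a point `w` of this set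
with `Re Q_t(w) < β + ε`, each `‖∑ⱼ u(tₖ⁻¹tⱼ)wⱼ‖` is at most `√ε`, whereas
`Q_t(w) = ∑ₖ ⟪wₖ, ∑ⱼ u(tₖ⁻¹tⱼ)wⱼ⟫`; so `β ≥ -O(√ε)` for every `ε > 0`, i.e. `β ≥ 0`. -/

open Filter Topology Set

theorem nonneg_of_sq_add_le_of_neg_le {α ι : Type*} [Fintype ι] {S : Set α} {Q : α → ℝ}
    (hQ : BddBelow (Q '' S)) {T : ι → α → α} (hT : ∀ k, MapsTo (T k) S S) {a : ι → α → ℝ}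
    (hdec : ∀ k, ∀ v ∈ S, a k v ^ 2 + Q (T k v) ≤ Q v) (c : ι → ℝ)
    (hlow : ∀ v ∈ S, -∑ k, c k * |a k v| ≤ Q v) {x : α} (hx : x ∈ S) : 0 ≤ Q x := by
  set β := sInf (Q '' S)
  have hβ : ∀ v ∈ S, β ≤ Q v := fun v hv ↦ csInf_le hQ (mem_image_of_mem Q hv)
  have key : ∀ ε > 0, -((∑ k, |c k|) * √ε + ε) ≤ β := by
    intro ε hε
    obtain ⟨_, ⟨v, hv, rfl⟩, hvε⟩ :=
      exists_lt_of_csInf_lt ⟨_, mem_image_of_mem Q hx⟩ (lt_add_of_pos_right β hε)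
    have hsum : ∑ k, c k * |a k v| ≤ (∑ k, |c k|) * √ε := by
      rw [Finset.sum_mul]
      refine Finset.sum_le_sum fun k _ ↦ ?_
      have hak : |a k v| ≤ √ε :=
        Real.abs_le_sqrt (by linarith [hdec k v hv, hβ _ (hT k hv)])
      calc c k * |a k v| ≤ |c k| * |a k v| :=
            mul_le_mul_of_nonneg_right (le_abs_self _) (abs_nonneg _)
        _ ≤ |c k| * √ε := mul_le_mul_of_nonneg_left hak (abs_nonneg _)
    linarith [hlow v hv]
  have hlim : Tendsto (fun ε ↦ -((∑ k, |c k|) * √ε + ε)) (𝓝[>] 0) (𝓝 0) := by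
    have hcont : Continuous fun ε ↦ -((∑ k, |c k|) * √ε + ε) := by fun_prop
    simpa using (hcont.tendsto 0).mono_left nhdsWithin_le_nhds
  exact (le_of_tendsto hlim (eventually_nhdsWithin_of_forall key)).trans (hβ x hx)

namespace IsPartialRepresentation

variable {G : Type*} [Group G] {H : Type*} [NormedAddCommGroup H] [InnerProductSpace ℂ H]
  [CompleteSpace H] {u : G → H →L[ℂ] H}

theorem map_inv (hu : IsPartialRepresentation u) (t : G) : u t⁻¹ = star (u t) := by
  rw [hu.2.1, ContinuousLinearMap.star_eq_adjoint]

theorem star_map (hu : IsPartialRepresentation u) (t : G) : star (u t) = u t⁻¹ :=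
  (hu.map_inv t).symm

theorem mul_mul_map_inv (hu : IsPartialRepresentation u) (s t : G) :
    u s * u t * u t⁻¹ = u (s * t) * u t⁻¹ :=
  hu.2.2 s t

theorem map_mul_map_inv_mul (hu : IsPartialRepresentation u) (t s : G) :
    u t * u t⁻¹ * u s = u t * u (t⁻¹ * s) := by
  simpa only [star_mul, hu.star_map, inv_inv, mul_inv_rev, mul_assoc]
    using congrArg star (hu.mul_mul_map_inv s⁻¹ t)

theorem map_mul_map_inv_mul_self (hu : IsPartialRepresentation u) (t : G) :
    u t * u t⁻¹ * u t = u t := by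
  rw [hu.map_mul_map_inv_mul, inv_mul_cancel, hu.1, mul_one]

theorem isStarProjection_map_mul_map_inv (hu : IsPartialRepresentation u) (t : G) :
    IsStarProjection (u t * u t⁻¹) where
  isIdempotentElem := by
    rw [IsIdempotentElem, ← mul_assoc, hu.map_mul_map_inv_mul_self]
  isSelfAdjoint := by
    rw [IsSelfAdjoint, star_mul, hu.star_map, hu.star_map, inv_inv]

theorem norm_le_one (hu : IsPartialRepresentation u) (t : G) : ‖u t‖ ≤ 1 := by
  have hp := (hu.isStarProjection_map_mul_map_inv t⁻¹).norm_le
  rw [inv_inv, ← hu.star_map, CStarRing.norm_star_mul_self] at hp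
  nlinarith [norm_nonneg (u t)]

theorem map_mul_map_mul_map_inv (hu : IsPartialRepresentation u) (r s : G) :
    u r * (u s * u s⁻¹) = u (r * s) * u (r * s)⁻¹ * u r := by
  rw [← mul_assoc, hu.mul_mul_map_inv, hu.map_mul_map_inv_mul, mul_inv_rev, inv_mul_cancel_right]

theorem one_sub_mul_map_mul_one_sub (hu : IsPartialRepresentation u) (a b : G) :
    (1 - u a⁻¹ * u a) * u (a⁻¹ * b) * (1 - u b⁻¹ * u b) = u (a⁻¹ * b) - u a⁻¹ * u b := by
  have hp := hu.isStarProjection_map_mul_map_inv a⁻¹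
  rw [inv_inv] at hp
  have hcomm : u (a⁻¹ * b) * (1 - u b⁻¹ * u b) = (1 - u a⁻¹ * u a) * u (a⁻¹ * b) := by
    have := hu.map_mul_map_mul_map_inv (a⁻¹ * b) b⁻¹
    rw [inv_inv, mul_inv_cancel_right, inv_inv] at this
    rw [mul_sub, sub_mul, mul_one, one_mul, this]
  have hcompose := hu.map_mul_map_inv_mul a⁻¹ (a⁻¹ * b)
  rw [inv_inv, mul_inv_cancel_left] at hcompose
  rw [mul_assoc, hcomm, ← mul_assoc, hp.one_sub.isIdempotentElem.eq, sub_mul, one_mul,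
    hcompose]

theorem norm_one_sub_map_inv_mul_map_apply_le (hu : IsPartialRepresentation u) (s : G) (x : H) :
    ‖(1 - u s⁻¹ * u s) x‖ ≤ ‖x‖ := by
  have hp := (hu.isStarProjection_map_mul_map_inv s⁻¹).one_sub.norm_le
  rw [inv_inv] at hp
  exact ((1 - u s⁻¹ * u s).le_opNorm x).trans (mul_le_of_le_one_left (norm_nonneg _) hp)

end IsPartialRepresentation

section KernelForm

variable {G : Type*} [Group G] {H : Type*} [NormedAddCommGroup H] [InnerProductSpace ℂ H]
  {ι : Type*} [Fintype ι]

noncomputable def kernelForm (u : G → H →L[ℂ] H) (t : ι → G) (v : ι → H) : ℂ :=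
  ∑ i, ∑ j, inner ℂ (v i) (u ((t i)⁻¹ * t j) (v j))

theorem kernelForm_mul_left (u : G → H →L[ℂ] H) (g : G) (t : ι → G) (v : ι → H) :
    kernelForm u (fun i ↦ g * t i) v = kernelForm u t v := by
  simp only [kernelForm, mul_inv_rev, mul_assoc, inv_mul_cancel_left]

theorem kernelForm_eq_sum_inner (u : G → H →L[ℂ] H) (t : ι → G) (v : ι → H) :
    kernelForm u t v = ∑ k, inner ℂ (v k) (∑ j, u ((t k)⁻¹ * t j) (v j)) := by
  simp only [kernelForm, inner_sum]

theorem neg_sum_norm_mul_norm_le_re_kernelForm (u : G → H →L[ℂ] H) (t : ι → G) (v : ι → H) :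
    -∑ k, ‖v k‖ * ‖∑ j, u ((t k)⁻¹ * t j) (v j)‖ ≤ (kernelForm u t v).re := by
  rw [kernelForm_eq_sum_inner, Complex.re_sum, ← Finset.sum_neg_distrib]
  refine Finset.sum_le_sum fun k _ ↦ ?_
  exact neg_le_of_abs_le ((Complex.abs_re_le_norm _).trans (norm_inner_le_norm _ _))

variable [CompleteSpace H] {u : G → H →L[ℂ] H}

theorem IsPartialRepresentation.norm_kernelForm_le (hu : IsPartialRepresentation u)
    (t : ι → G) (v : ι → H) : ‖kernelForm u t v‖ ≤ (∑ i, ‖v i‖) ^ 2 := by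
  rw [sq, Finset.sum_mul_sum]
  refine (norm_sum_le _ _).trans (Finset.sum_le_sum fun i _ ↦ ?_)
  refine (norm_sum_le _ _).trans (Finset.sum_le_sum fun j _ ↦ ?_)
  refine (norm_inner_le_norm _ _).trans (mul_le_mul_of_nonneg_left ?_ (norm_nonneg _))
  exact ((u _).le_opNorm _).trans (mul_le_of_le_one_left (norm_nonneg _) (hu.norm_le_one _))

theorem IsPartialRepresentation.inner_map_left (hu : IsPartialRepresentation u) (s : G)
    (x y : H) : inner ℂ (u s x) y = inner ℂ x (u s⁻¹ y) := by
  rw [hu.map_inv, ContinuousLinearMap.star_eq_adjoint, ContinuousLinearMap.adjoint_inner_right]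

theorem IsPartialRepresentation.conj_kernelForm (hu : IsPartialRepresentation u)
    (t : ι → G) (v : ι → H) : starRingEnd ℂ (kernelForm u t v) = kernelForm u t v := by
  rw [kernelForm, map_sum, Finset.sum_comm]
  refine Finset.sum_congr rfl fun j _ ↦ ?_
  rw [map_sum]
  refine Finset.sum_congr rfl fun i _ ↦ ?_
  rw [inner_conj_symm, hu.inner_map_left, mul_inv_rev, inv_inv]

theorem IsPartialRepresentation.inner_one_sub_map_one_sub (hu : IsPartialRepresentation u)
    (a b : G) (x y : H) :
    inner ℂ ((1 - u a⁻¹ * u a) x) (u (a⁻¹ * b) ((1 - u b⁻¹ * u b) y))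
      = inner ℂ x (u (a⁻¹ * b) y) - inner ℂ (u a x) (u b y) := by
  have hp := (hu.isStarProjection_map_mul_map_inv a⁻¹).one_sub
  rw [inv_inv] at hp
  rw [← hp.isSelfAdjoint.adjoint_eq, ContinuousLinearMap.adjoint_inner_left,
    ← mul_apply_eq_comp, ← mul_apply_eq_comp, hu.one_sub_mul_map_mul_one_sub,
    sub_apply, inner_sub_right, mul_apply_eq_comp, ← hu.inner_map_left]

theorem IsPartialRepresentation.kernelForm_eq_norm_sq_add (hu : IsPartialRepresentation u)
    (t : ι → G) (v : ι → H) :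
    kernelForm u t v = (‖∑ j, u (t j) (v j)‖ ^ 2 : ℝ)
      + kernelForm u t (fun j ↦ (1 - u (t j)⁻¹ * u (t j)) (v j)) := by
  have hsq : ((‖∑ j, u (t j) (v j)‖ ^ 2 : ℝ) : ℂ)
      = ∑ i, ∑ j, inner ℂ (u (t i) (v i)) (u (t j) (v j)) := by
    have := inner_self_eq_norm_sq_to_K (𝕜 := ℂ) (∑ j, u (t j) (v j))
    simp only [sum_inner, inner_sum] at this
    rw [Finset.sum_comm]
    exact_mod_cast this.symm
  simp only [kernelForm, hu.inner_one_sub_map_one_sub, Finset.sum_sub_distrib, hsq]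
  ring

theorem IsPartialRepresentation.re_kernelForm_nonneg (hu : IsPartialRepresentation u)
    (t : ι → G) (v : ι → H) : 0 ≤ (kernelForm u t v).re := by
  refine nonneg_of_sq_add_le_of_neg_le (Q := fun w ↦ (kernelForm u t w).re)
    (S := {w | ∀ j, ‖w j‖ ≤ ‖v j‖})
    (T := fun k w j ↦ (1 - u ((t k)⁻¹ * t j)⁻¹ * u ((t k)⁻¹ * t j)) (w j))
    (a := fun k w ↦ ‖∑ j, u ((t k)⁻¹ * t j) (w j)‖) ?bdd ?maps ?dec (fun k ↦ ‖v k‖) ?low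
    fun j ↦ le_rfl
  case bdd =>
    refine ⟨-(∑ j, ‖v j‖) ^ 2, ?_⟩
    rintro _ ⟨w, hw, rfl⟩
    have hsum : ∑ j, ‖w j‖ ≤ ∑ j, ‖v j‖ := Finset.sum_le_sum fun j _ ↦ hw j
    calc -(∑ j, ‖v j‖) ^ 2 ≤ -(∑ j, ‖w j‖) ^ 2 :=
          neg_le_neg (pow_le_pow_left₀ (Finset.sum_nonneg fun j _ ↦ norm_nonneg _) hsum 2)
      _ ≤ -‖kernelForm u t w‖ := neg_le_neg (hu.norm_kernelForm_le t w)
      _ ≤ (kernelForm u t w).re := neg_le_of_abs_le (Complex.abs_re_le_norm _)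
  case maps =>
    exact fun k w hw j ↦ (hu.norm_one_sub_map_inv_mul_map_apply_le _ (w j)).trans (hw j)
  case dec =>
    intro k w _
    have hsplit := hu.kernelForm_eq_norm_sq_add (fun j ↦ (t k)⁻¹ * t j) w
    rw [kernelForm_mul_left, kernelForm_mul_left] at hsplit
    rw [hsplit, Complex.add_re, Complex.ofReal_re]
  case low =>
    intro w hw
    simp only [abs_norm]
    refine le_trans (neg_le_neg (Finset.sum_le_sum fun k _ ↦ ?_))
      (neg_sum_norm_mul_norm_le_re_kernelForm u t w)
    exact mul_le_mul_of_nonneg_right (hw k) (norm_nonneg _)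

end KernelForm

theorem IsPartialRepresentation.posDef_general
    {G : Type*} [Group G]
    {H : Type*} [NormedAddCommGroup H] [InnerProductSpace ℂ H] [CompleteSpace H]
    (u : G → H →L[ℂ] H) (hu : IsPartialRepresentation u) :
    ∀ (n : ℕ) (t : Fin n → G) (h : Fin n → H),
      0 ≤ ∑ i : Fin n, ∑ j : Fin n,
        (inner ℂ (h i) ((u ((t i)⁻¹ * t j)) (h j)) : ℂ) := by
  intro n t h
  change 0 ≤ kernelForm u t h
  rw [← Complex.conj_eq_iff_re.mp (hu.conj_kernelForm t h), Complex.zero_le_real]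
  exact hu.re_kernelForm_nonneg t h

/-- Any partial representation of a discrete amenable group is a positive definite map:
for all `t₁, …, tₙ ∈ G` and `h₁, …, hₙ ∈ H`, the sum `∑ᵢⱼ ⟪hᵢ, u(tᵢ⁻¹ tⱼ) hⱼ⟫` is a
nonnegative real number (here `0 ≤ ·` refers to the partial order on `ℂ`, so the sum is
real and nonnegative). -/
theorem IsPartialRepresentation.posDef
    {G : Type*} [Group G] [TopologicalSpace G] [DiscreteTopology G]
    (hamen : ∃ m : (G →ᵇ ℝ) →ₗ[ℝ] ℝ, IsLeftInvariantMean G m)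
    {H : Type*} [NormedAddCommGroup H] [InnerProductSpace ℂ H] [CompleteSpace H]
    (u : G → H →L[ℂ] H) (hu : IsPartialRepresentation u) :
    ∀ (n : ℕ) (t : Fin n → G) (h : Fin n → H),
      0 ≤ ∑ i : Fin n, ∑ j : Fin n,
        (inner ℂ (h i) ((u ((t i)⁻¹ * t j)) (h j)) : ℂ) :=
  IsPartialRepresentation.posDef_general u hu
end
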